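/- arXiv:1008.2583 — 2 statements merged into one kernel-verified Lean document; each statement's English description precedes it below -/
import Mathlib

section
/- Let k ≥ 2 be an even integer and n ≥ 3k an integer. For every index t, the subgraph of P(n,k) induced by the 2k-segment I_t has independence number exactly 2k. -/
namespace GP

/-- Adjacency generating relation for the generalized Petersen graph `P(n,k)`:
`Sum.inl i` is the outer vertex `u_i`, `Sum.inr i` is the inner vertex `v_i`. -/
def adjFun (n k : ℕ) : (ZMod n ⊕ ZMod n) → (ZMod n ⊕ ZMod n) → Prop
  | Sum.inl i, Sum.inl j => j = i + 1
  | Sum.inl i, Sum.inr j => j = i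
  | Sum.inr i, Sum.inr j => j = i + (k : ZMod n)
  | _, _ => False

/-- The generalized Petersen graph `P(n,k)`. -/
def P (n k : ℕ) : SimpleGraph (ZMod n ⊕ ZMod n) :=
  SimpleGraph.fromRel (adjFun n k)

/-- `s` is an independent set of vertices in `G`. -/
def IsIndep {V : Type*} (G : SimpleGraph V) (s : Finset V) : Prop :=
  ∀ v ∈ s, ∀ w ∈ s, ¬ G.Adj v w

/-- The independence number of a graph. -/
noncomputable def indepNum {V : Type*} (G : SimpleGraph V) : ℕ :=
  sSup {m | ∃ s : Finset V, IsIndep G s ∧ s.card = m}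

/-- `α(P(n,k))`. -/
noncomputable def alpha (n k : ℕ) : ℕ := indepNum (P n k)

/-- The outer vertex `u_i`. -/
def u (n : ℕ) (i : ZMod n) : ZMod n ⊕ ZMod n := Sum.inl i

/-- The inner vertex `v_i`. -/
def v (n : ℕ) (i : ZMod n) : ZMod n ⊕ ZMod n := Sum.inr i

/-- The `2k`-segment `I_t = {u_t, …, u_{t+2k-1}} ∪ {v_t, …, v_{t+2k-1}}`. -/
def segment (n k : ℕ) (t : ZMod n) : Finset (ZMod n ⊕ ZMod n) :=
  ((Finset.range (2*k)).image fun j : ℕ => u n (t + (j : ZMod n))) ∪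
  ((Finset.range (2*k)).image fun j : ℕ => v n (t + (j : ZMod n)))

/-! Since `u_i` and `v_i` are adjacent, an independent set meets each of the `2k` spokes
`{u_{t+j}, v_{t+j}}` of `I_t` at most once. Conversely, take `u_{t+j}` when `j mod k` is even
and `j < k`, or odd and `j ≥ k`, and `v_{t+j}` otherwise: the chosen outer vertices are never
consecutive, and of `v_{t+j}, v_{t+j+k}` exactly one is chosen. The bound `n ≥ 3k` rules out
edges inside `I_t` that wrap around modulo `n`. -/

theorem indepNum_induce_eq {V : Type*} (G : SimpleGraph V) (S : Finset V) (m : ℕ)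
    (hle : ∀ s ⊆ S, IsIndep G s → s.card ≤ m) (hex : ∃ s ⊆ S, IsIndep G s ∧ s.card = m) :
    indepNum (G.induce (S : Set V)) = m := by
  classical
  set sizes := {m' | ∃ s : Finset (S : Set V), IsIndep (G.induce (S : Set V)) s ∧ s.card = m'}
  have hbdd : ∀ m' ∈ sizes, m' ≤ m := by
    rintro _ ⟨s, hs, rfl⟩
    rw [← Finset.card_map (Function.Embedding.subtype _)]
    refine hle _ (fun x hx => ?_) ?_
    · obtain ⟨y, -, rfl⟩ := Finset.mem_map.mp hx
      exact y.2
    · simp only [IsIndep, Finset.mem_map, Function.Embedding.coe_subtype]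
      rintro _ ⟨a, ha, rfl⟩ _ ⟨b, hb, rfl⟩
      exact hs a ha b hb
  obtain ⟨s, hsS, hs, rfl⟩ := hex
  have hmem : s.card ∈ sizes := by
    refine ⟨s.subtype (· ∈ (S : Set V)), fun a ha b hb => ?_, ?_⟩
    · exact hs a (Finset.mem_subtype.mp ha) b (Finset.mem_subtype.mp hb)
    · rw [Finset.card_subtype, Finset.filter_true_of_mem fun x hx => Finset.mem_coe.mpr (hsS hx)]
  exact le_antisymm (csSup_le ⟨_, hmem⟩ hbdd) (le_csSup ⟨_, hbdd⟩ hmem)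

section Segment

variable {n k : ℕ}

theorem natCast_eq_of_add_natCast_eq {t : ZMod n} {a b : ℕ} (ha : a < n) (hb : b < n)
    (h : t + a = t + b) : a = b := by
  have := (ZMod.natCast_eq_natCast_iff' a b n).mp (add_left_cancel h)
  rwa [Nat.mod_eq_of_lt ha, Nat.mod_eq_of_lt hb] at this

def vertexIndex : ZMod n ⊕ ZMod n → ZMod n := Sum.elim id id

theorem P_adj_u_v (i : ZMod n) : (P n k).Adj (u n i) (v n i) := by
  simp [P, u, v, adjFun]

theorem injOn_vertexIndex_of_isIndep {s : Finset (ZMod n ⊕ ZMod n)} (hs : IsIndep (P n k) s) :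
    Set.InjOn vertexIndex (s : Set (ZMod n ⊕ ZMod n)) := by
  rintro (i | i) hx (j | j) hy (hij : i = j) <;> subst hij
  · rfl
  · exact absurd (P_adj_u_v i) (hs _ hx _ hy)
  · exact absurd (P_adj_u_v i).symm (hs _ hx _ hy)
  · rfl

theorem vertexIndex_image_segment_subset (t : ZMod n) :
    (segment n k t).image vertexIndex ⊆
      (Finset.range (2 * k)).image fun j : ℕ => t + (j : ZMod n) := by
  intro i hi
  simp only [segment, Finset.image_union, Finset.image_image, Finset.mem_union] at hi
  rcases hi with hi | hi <;> simpa [vertexIndex, u, v, Function.comp_def] using hi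

theorem card_le_of_isIndep_of_subset_segment {t : ZMod n} {s : Finset (ZMod n ⊕ ZMod n)}
    (hs : IsIndep (P n k) s) (hst : s ⊆ segment n k t) : s.card ≤ 2 * k :=
  calc s.card = (s.image vertexIndex).card :=
        (Finset.card_image_of_injOn (injOn_vertexIndex_of_isIndep hs)).symm
    _ ≤ ((Finset.range (2 * k)).image fun j : ℕ => t + (j : ZMod n)).card :=
        Finset.card_le_card ((Finset.image_subset_image hst).trans
          (vertexIndex_image_segment_subset t))
    _ ≤ 2 * k := Finset.card_image_le.trans (Finset.card_range _).le

/-- Whether the independent set of size `2k` in `I_t` takes `u_{t+j}` rather than `v_{t+j}`. -/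
def TakesOuter (k j : ℕ) : Prop := j % k % 2 = j / k

instance (k : ℕ) : DecidablePred (TakesOuter k) :=
  fun j => inferInstanceAs (Decidable (j % k % 2 = j / k))

theorem div_mod_of_lt_two_mul {j : ℕ} (hj : j < 2 * k) :
    (j < k ∧ j / k = 0 ∧ j % k = j) ∨ (k ≤ j ∧ j / k = 1 ∧ j % k = j - k) := by
  rcases lt_or_ge j k with h | h
  · exact Or.inl ⟨h, Nat.div_eq_of_lt h, Nat.mod_eq_of_lt h⟩
  · obtain ⟨r, rfl⟩ := Nat.exists_eq_add_of_le h
    have hr : r < k := by omega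
    refine Or.inr ⟨h, ?_, ?_⟩
    · rw [Nat.add_div_left _ (by omega), Nat.div_eq_of_lt hr]
    · rw [Nat.add_mod_left, Nat.mod_eq_of_lt hr]
      omega

theorem not_takesOuter_succ {j : ℕ} (hj : j + 1 < 2 * k) (h : TakesOuter k j) :
    ¬ TakesOuter k (j + 1) := by
  unfold TakesOuter at *
  rcases div_mod_of_lt_two_mul (k := k) (j := j) (by omega) with hj' | hj' <;>
    rcases div_mod_of_lt_two_mul hj with hj'' | hj'' <;> omega

theorem takesOuter_or_takesOuter_add {j : ℕ} (hj : j + k < 2 * k) :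
    TakesOuter k j ∨ TakesOuter k (j + k) := by
  unfold TakesOuter
  rcases div_mod_of_lt_two_mul (k := k) (j := j) (by omega) with hj' | hj' <;>
    rcases div_mod_of_lt_two_mul hj with hj'' | hj'' <;> omega

def witnessVertex (n k : ℕ) (t : ZMod n) (j : ℕ) : ZMod n ⊕ ZMod n :=
  if TakesOuter k j then u n (t + j) else v n (t + j)

def witness (n k : ℕ) (t : ZMod n) : Finset (ZMod n ⊕ ZMod n) :=
  (Finset.range (2 * k)).image (witnessVertex n k t)

theorem vertexIndex_witnessVertex (t : ZMod n) (j : ℕ) :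
    vertexIndex (witnessVertex n k t j) = t + j := by
  unfold witnessVertex
  split_ifs <;> rfl

theorem witness_subset_segment (t : ZMod n) : witness n k t ⊆ segment n k t := by
  intro x hx
  obtain ⟨j, hj, rfl⟩ := Finset.mem_image.mp hx
  unfold witnessVertex segment
  split_ifs
  · exact Finset.mem_union_left _ (Finset.mem_image_of_mem _ hj)
  · exact Finset.mem_union_right _ (Finset.mem_image_of_mem _ hj)

theorem card_witness (hn : 2 * k ≤ n) (t : ZMod n) : (witness n k t).card = 2 * k := by
  rw [witness, Finset.card_image_of_injOn, Finset.card_range]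
  intro a ha b hb hab
  simp only [Finset.coe_range, Set.mem_Iio] at ha hb
  have := congrArg vertexIndex hab
  rw [vertexIndex_witnessVertex, vertexIndex_witnessVertex] at this
  exact natCast_eq_of_add_natCast_eq (by omega) (by omega) this

theorem not_adjFun_witnessVertex (hn : 3 * k ≤ n) (t : ZMod n) {a b : ℕ}
    (ha : a < 2 * k) (hb : b < 2 * k) :
    ¬ adjFun n k (witnessVertex n k t a) (witnessVertex n k t b) := by
  unfold witnessVertex
  split_ifs with hta htb htb <;> simp only [u, v, adjFun, not_false_eq_true] <;> intro h
  · have hba : b = a + 1 := natCast_eq_of_add_natCast_eq (t := t) (by omega) (by omega)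
      (by rw [h]; push_cast; ring)
    exact not_takesOuter_succ (by omega) hta (hba ▸ htb)
  · exact htb (natCast_eq_of_add_natCast_eq (t := t) (by omega) (by omega) h ▸ hta)
  · have hba : b = a + k := natCast_eq_of_add_natCast_eq (t := t) (by omega) (by omega)
      (by rw [h]; push_cast; ring)
    subst hba
    exact (takesOuter_or_takesOuter_add hb).elim hta htb

theorem isIndep_witness (hn : 3 * k ≤ n) (t : ZMod n) : IsIndep (P n k) (witness n k t) := by
  simp only [IsIndep, witness, Finset.mem_image, Finset.mem_range]
  rintro _ ⟨a, ha, rfl⟩ _ ⟨b, hb, rfl⟩ hadj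
  rcases ((SimpleGraph.fromRel_adj _ _ _).mp hadj).2 with h | h
  · exact not_adjFun_witnessVertex hn t ha hb h
  · exact not_adjFun_witnessVertex hn t hb ha h

end Segment

theorem segment_induced_indepNum_general (n k : ℕ) (hn : 3 * k ≤ n)
    (t : ZMod n) :
    indepNum (SimpleGraph.induce (↑(segment n k t) : Set (ZMod n ⊕ ZMod n)) (P n k)) = 2 * k :=
  indepNum_induce_eq _ _ _ (fun _ hst hs => card_le_of_isIndep_of_subset_segment hs hst)
    ⟨witness n k t, witness_subset_segment t, isIndep_witness hn t, card_witness (by omega) t⟩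

/-- For even `k ≥ 2` and `n ≥ 3k`, the subgraph of `P(n,k)` induced by
the `2k`-segment `I_t` has independence number exactly `2k`. -/
theorem segment_induced_indepNum (n k : ℕ) (hke : Even k) (hk : 2 ≤ k) (hn : 3 * k ≤ n)
    (t : ZMod n) :
    indepNum (SimpleGraph.induce (↑(segment n k t) : Set (ZMod n ⊕ ZMod n)) (P n k)) = 2 * k :=
  segment_induced_indepNum_general n k hn t

end GP
end

section
/- Let n be an odd integer and k > 2 an even integer with n > 2k, and let r be the remainder of n modulo 2k (so r is odd and r ≠ 0, k). Then α(P(n,k)) ≥ (2k−1)⌊n/(2k)⌋ + c, where c = −k/2 + 2 if r = 1, c = (3r−k−1)/2 if 1 < r < k, and c = k/2 + (r−1)/2 if k < r < 2k. -/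
/-!
Write `n = (2k + r) + 2kq`. A choice of outer positions `O` and inner positions `I` gives the
set `{u_x | O x} ∪ {v_x | I x}`, which is independent in `P(n,k)` as soon as `O` and `I` are
disjoint, `O` never holds at two consecutive positions and `I` never holds at two positions `k`
apart, all read cyclically. Cover the cycle by a tail of length `2k + r` followed by `q` blocks of
length `2k`; a block takes `u, v, u, …` on its first half, `v, u, v, …` on its second half and
leaves its last position empty, so it contributes `2k - 1` vertices. The tail, tuned to `r`, fits
between the last block and the first one, and counting its vertices gives the constant `c`.
-/

namespace GP

open Finset

theorem card_le_indepNum {V : Type*} [Fintype V] {G : SimpleGraph V} {s : Finset V}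
    (hs : IsIndep G s) : #s ≤ indepNum G :=
  le_csSup ⟨Fintype.card V, by rintro _ ⟨t, -, rfl⟩; exact t.card_le_univ⟩ ⟨s, hs, rfl⟩

theorem _root_.Nat.count_congr_of_lt {p q : ℕ → Prop} [DecidablePred p] [DecidablePred q]
    {n : ℕ} (h : ∀ x < n, p x ↔ q x) : Nat.count p n = Nat.count q n := by
  simp only [Nat.count_eq_card_filter_range]
  exact congrArg card (filter_congr fun x hx => h x (mem_range.1 hx))

theorem _root_.Nat.count_or_of_disjoint {p q : ℕ → Prop} [DecidablePred p] [DecidablePred q]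
    {n : ℕ} (hpq : ∀ x < n, p x → ¬q x) :
    Nat.count (fun x => p x ∨ q x) n = Nat.count p n + Nat.count q n := by
  induction n with
  | zero => simp
  | succ n ih =>
    have := hpq n n.lt_succ_self
    simp only [Nat.count_succ, ih fun x hx => hpq x (Nat.lt_succ_of_lt hx)]
    split_ifs <;> simp_all <;> omega

theorem _root_.Function.Periodic.count_mul {p : ℕ → Prop} [DecidablePred p] {a : ℕ}
    (hp : Function.Periodic p a) (q : ℕ) : Nat.count p (a * q) = q * Nat.count p a := by
  induction q with
  | zero => simp
  | succ q ih =>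
    simp only [Nat.mul_succ, Nat.count_add', show ∀ x, p (x + a) = p x from hp, ih,
      Nat.succ_mul]

theorem _root_.Nat.count_eq_half_of_iff_even {p : ℕ → Prop} [DecidablePred p] {n : ℕ}
    (hp : ∀ x < n, p x ↔ x % 2 = 0) : Nat.count p n = (n + 1) / 2 := by
  induction n with
  | zero => simp
  | succ n ih =>
    simp only [Nat.count_succ, ih fun x hx => hp x (Nat.lt_succ_of_lt hx), hp n n.lt_succ_self]
    split_ifs <;> omega

theorem _root_.Nat.add_mod_eq_or {x d m : ℕ} (hd : d < m) :
    (x + d) % m = x % m + d ∨ (x + d) % m + m = x % m + d := by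
  rw [Nat.add_mod_eq_ite, Nat.mod_eq_of_lt hd]
  split_ifs <;> omega

theorem mod_add_iff_of_wrap {p : ℕ → Prop} {n k : ℕ} (hkn : k ≤ n)
    (hwrap : ∀ j < k, p (n + j) ↔ p j) {y d : ℕ} (hy : y < n) (hd : d ≤ k) :
    p ((y + d) % n) ↔ p (y + d) := by
  rcases lt_or_ge (y + d) n with hlt | hge
  · rw [Nat.mod_eq_of_lt hlt]
  · have hmod : (y + d) % n = y + d - n := by
      rw [Nat.mod_eq_sub_mod hge, Nat.mod_eq_of_lt (by omega)]
    rw [hmod, ← hwrap (y + d - n) (by omega), Nat.add_sub_cancel' hge]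

section VertexSet

variable {n : ℕ} [NeZero n] {O I : ℕ → Prop} [DecidablePred O] [DecidablePred I]

variable (n O I) in
def vertexSet : Finset (ZMod n ⊕ ZMod n) :=
  ({x | O x.val} : Finset (ZMod n)).disjSum {x | I x.val}

theorem card_filter_val_eq_count (p : ℕ → Prop) [DecidablePred p] :
    #{x : ZMod n | p x.val} = Nat.count p n := by
  rw [Nat.count_eq_card_filter_range]
  refine card_nbij' ZMod.val (fun i => (i : ZMod n)) ?_ ?_ ?_ ?_
  · intro x hx
    simp_all [ZMod.val_lt]
  · intro i hi
    simp_all [Nat.mod_eq_of_lt]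
  · intro x _
    simp
  · intro i hi
    simp_all [Nat.mod_eq_of_lt]

theorem card_vertexSet : #(vertexSet n O I) = Nat.count O n + Nat.count I n := by
  rw [vertexSet, card_disjSum, card_filter_val_eq_count O, card_filter_val_eq_count I]

theorem isIndep_vertexSet {k : ℕ} (hk : 0 < k) (hkn : k ≤ n)
    (hwrapO : ∀ j < k, O (n + j) ↔ O j) (hwrapI : ∀ j < k, I (n + j) ↔ I j)
    (hOO : ∀ x < n, O x → ¬O (x + 1)) (hII : ∀ x < n, I x → ¬I (x + k))
    (hOI : ∀ x < n, O x → ¬I x) :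
    IsIndep (P n k) (vertexSet n O I) := by
  have shift : ∀ {p : ℕ → Prop}, (∀ j < k, p (n + j) ↔ p j) →
      ∀ (x : ZMod n) (d : ℕ), d ≤ k → (p (x + d).val ↔ p (x.val + d)) := by
    intro p hwrap x d hd
    rw [ZMod.val_add, ZMod.val_natCast, Nat.add_mod_mod]
    exact mod_add_iff_of_wrap hkn hwrap (ZMod.val_lt x) hd
  have shift_one : ∀ x : ZMod n, O (x + 1).val ↔ O (x.val + 1) := fun x => by
    simpa using shift hwrapO x 1 hk
  rintro (x | x) hx (y | y) hy hxy <;>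
    simp only [vertexSet, inl_mem_disjSum, inr_mem_disjSum, mem_filter, mem_univ, true_and]
      at hx hy <;>
    simp only [P, SimpleGraph.fromRel_adj, adjFun] at hxy
  · rcases hxy.2 with rfl | rfl
    · exact hOO _ (ZMod.val_lt x) hx ((shift_one x).1 hy)
    · exact hOO _ (ZMod.val_lt y) hy ((shift_one y).1 hx)
  · rcases hxy.2 with rfl | hf
    · exact hOI _ (ZMod.val_lt _) hx hy
    · exact hf
  · rcases hxy.2 with hf | rfl
    · exact hf
    · exact hOI _ (ZMod.val_lt _) hy hx
  · rcases hxy.2 with rfl | rfl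
    · exact hII _ (ZMod.val_lt x) hx ((shift hwrapI x k le_rfl).1 hy)
    · exact hII _ (ZMod.val_lt y) hy ((shift hwrapI y k le_rfl).1 hx)

end VertexSet

section Append

variable {p q p' q' : ℕ → Prop} {L : ℕ}

def append (L : ℕ) (p q : ℕ → Prop) (x : ℕ) : Prop :=
  if x < L then p x else q (x - L)

instance [DecidablePred p] [DecidablePred q] : DecidablePred (append L p q) := fun x => by
  unfold append; infer_instance

theorem append_not_of_forall_not {d : ℕ} (hp : ∀ x < L, p x → ¬p' (x + d))
    (hq : ∀ x, q x → ¬q' (x + d)) (hjoin : ∀ j < d, p' (L + j) ↔ q' j) (x : ℕ)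
    (hx : append L p q x) : ¬append L p' q' (x + d) := by
  unfold append at hx ⊢
  by_cases h₁ : x < L
  · rw [if_pos h₁] at hx
    by_cases h₂ : x + d < L
    · rw [if_pos h₂]
      exact hp x h₁ hx
    · rw [if_neg h₂, ← hjoin (x + d - L) (by omega), Nat.add_sub_cancel' (by omega)]
      exact hp x h₁ hx
  · rw [if_neg h₁] at hx
    rw [if_neg (by omega), Nat.sub_add_comm (by omega)]
    exact hq _ hx

theorem append_add_mul_add_iff {m : ℕ} (hq : Function.Periodic q m) (t : ℕ) {j : ℕ}
    (hj : j < L) (hpq : p j ↔ q j) : append L p q (L + m * t + j) ↔ append L p q j := by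
  simp only [append, if_neg (show ¬L + m * t + j < L by omega), if_pos hj]
  rw [show L + m * t + j - L = j + t • m by rw [smul_eq_mul, Nat.mul_comm]; omega,
    hq.nsmul t j, hpq]

theorem count_append [DecidablePred p] [DecidablePred q] (m : ℕ) :
    Nat.count (append L p q) (L + m) = Nat.count p L + Nat.count q m := by
  rw [Nat.count_add]
  congr 1
  · exact Nat.count_congr_of_lt fun x hx => by simp only [append, if_pos hx]
  · exact Nat.count_congr_of_lt fun x _ => by
      simp only [append, if_neg (Nat.not_lt.2 (Nat.le_add_right L x)), Nat.add_sub_cancel_left]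

end Append

section Block

variable {k x : ℕ}

def blockOuter (k x : ℕ) : Prop :=
  let c := x % (2 * k)
  c < k ∧ c % 2 = 0 ∨ k ≤ c ∧ c < 2 * k - 1 ∧ c % 2 = 1

def blockInner (k x : ℕ) : Prop :=
  let c := x % (2 * k)
  c < k ∧ c % 2 = 1 ∨ k ≤ c ∧ c < 2 * k - 1 ∧ c % 2 = 0

instance : DecidablePred (blockOuter k) := fun _ => by unfold blockOuter; infer_instance

instance : DecidablePred (blockInner k) := fun _ => by unfold blockInner; infer_instance

theorem blockOuter_add_one (hk : 0 < k) (hke : Even k) (hx : blockOuter k x) :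
    ¬blockOuter k (x + 1) := by
  have := Nat.add_mod_eq_or (x := x) (show 1 < 2 * k by omega)
  have := Nat.mod_lt (x + 1) (show 0 < 2 * k by omega)
  rw [Nat.even_iff] at hke
  simp only [blockOuter] at *
  generalize x % (2 * k) = c at *
  generalize (x + 1) % (2 * k) = c' at *
  omega

theorem blockInner_add_self (hk : 0 < k) (hke : Even k) (hx : blockInner k x) :
    ¬blockInner k (x + k) := by
  have := Nat.add_mod_eq_or (x := x) (show k < 2 * k by omega)
  have := Nat.mod_lt (x + k) (show 0 < 2 * k by omega)
  rw [Nat.even_iff] at hke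
  simp only [blockInner] at *
  generalize x % (2 * k) = c at *
  generalize (x + k) % (2 * k) = c' at *
  omega

theorem not_blockInner_of_blockOuter (hx : blockOuter k x) : ¬blockInner k x := by
  simp only [blockOuter, blockInner] at *
  omega

theorem periodic_blockOuter : Function.Periodic (blockOuter k) (2 * k) := fun x => by
  simp only [blockOuter, Nat.add_mod_right]

theorem periodic_blockInner : Function.Periodic (blockInner k) (2 * k) := fun x => by
  simp only [blockInner, Nat.add_mod_right]

theorem blockOuter_iff_of_lt (hx : x < k) : blockOuter k x ↔ x % 2 = 0 := by
  simp only [blockOuter, Nat.mod_eq_of_lt (show x < 2 * k by omega)]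
  omega

theorem blockInner_iff_of_lt (hx : x < k) : blockInner k x ↔ x % 2 = 1 := by
  simp only [blockInner, Nat.mod_eq_of_lt (show x < 2 * k by omega)]
  omega

theorem count_blockOuter_or_blockInner (hk : 0 < k) (q : ℕ) :
    Nat.count (fun x => blockOuter k x ∨ blockInner k x) (2 * k * q) = q * (2 * k - 1) := by
  have hsel : ∀ x, (blockOuter k x ∨ blockInner k x) ↔ x % (2 * k) ≠ 2 * k - 1 := by
    intro x
    have := Nat.mod_lt x (show 0 < 2 * k by omega)
    simp only [blockOuter, blockInner]
    generalize x % (2 * k) = c at *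
    omega
  have hblock : Nat.count (fun x => blockOuter k x ∨ blockInner k x) (2 * k) = 2 * k - 1 := by
    have h2k : 2 * k = (2 * k - 1) + 1 := by omega
    rw [h2k, Nat.count_add, Nat.count_one, Nat.count_of_forall, if_neg, Nat.add_zero,
      Nat.add_sub_cancel]
    · rw [hsel, Nat.add_zero, Nat.mod_eq_of_lt (by omega)]
      exact not_not.mpr rfl
    · intro x hx
      rw [hsel, Nat.mod_eq_of_lt (by omega)]
      omega
  have hp : Function.Periodic (fun x => blockOuter k x ∨ blockInner k x) (2 * k) :=
    fun x => by simp only [periodic_blockOuter x, periodic_blockInner x]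
  rw [hp.count_mul, hblock]

end Block

section Tail

variable {k r y : ℕ}

/-- Positions from `2k + r` on repeat the alternating start of a block, so that the conditions
on the tail can be checked across its junction with the next block. -/
def tailOuter (k r y : ℕ) : Prop :=
  y < k ∧ y % 2 = 0 ∨ 2 * k + r ≤ y ∧ (y - (2 * k + r)) % 2 = 0 ∨
  k < y ∧ y < 2 * k + r ∧
    if r = 1 then y % 2 = 1
    else if r < k then y < k + r ∧ y % 2 = 1 ∨ k + r < y ∧ y < 2 * k + r - 1 ∧ y % 2 = 0
    else
      y < 2 * k ∧ y % 2 = 1 ∨ 2 * k < y ∧ y < 3 * k ∧ y % 2 = 0 ∨ 3 * k < y ∧ y % 2 = 1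

def tailInner (k r y : ℕ) : Prop :=
  y < k ∧ y % 2 = 1 ∨ 2 * k + r ≤ y ∧ (y - (2 * k + r)) % 2 = 1 ∨
  k ≤ y ∧ y < 2 * k + r ∧
    if r = 1 then y = k
    else if r < k then y < k + r ∧ y % 2 = 0 ∨ 2 * k ≤ y ∧ y < 2 * k + r - 1 ∧ y % 2 = 1
    else y < 2 * k ∧ y % 2 = 0 ∨ 2 * k < y ∧ y < 3 * k ∧ y % 2 = 1

instance : DecidablePred (tailOuter k r) := fun _ => by unfold tailOuter; infer_instance

instance : DecidablePred (tailInner k r) := fun _ => by unfold tailInner; infer_instance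

theorem tailOuter_add_one (hke : Even k) (hr : Odd r) (hy : y < 2 * k + r)
    (h : tailOuter k r y) : ¬tailOuter k r (y + 1) := by
  rw [Nat.even_iff] at hke
  rw [Nat.odd_iff] at hr
  unfold tailOuter at *
  split_ifs at * <;> omega

theorem tailInner_add_self (hk : 0 < k) (hke : Even k) (hr : Odd r) (hy : y < 2 * k + r)
    (h : tailInner k r y) : ¬tailInner k r (y + k) := by
  rw [Nat.even_iff] at hke
  rw [Nat.odd_iff] at hr
  unfold tailInner at *
  split_ifs at * <;> omega

theorem not_tailInner_of_tailOuter (h : tailOuter k r y) : ¬tailInner k r y := by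
  unfold tailOuter tailInner at *
  split_ifs at * <;> omega

theorem tailOuter_iff_of_lt (hy : y < k) : tailOuter k r y ↔ y % 2 = 0 := by
  unfold tailOuter
  split_ifs <;> omega

theorem tailInner_iff_of_lt (hy : y < k) : tailInner k r y ↔ y % 2 = 1 := by
  unfold tailInner
  split_ifs <;> omega

theorem tailOuter_add_iff (j : ℕ) : tailOuter k r (2 * k + r + j) ↔ j % 2 = 0 := by
  unfold tailOuter
  split_ifs <;> omega

theorem tailInner_add_iff (j : ℕ) : tailInner k r (2 * k + r + j) ↔ j % 2 = 1 := by
  unfold tailInner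
  split_ifs <;> omega

end Tail

section TailCount

variable {k r : ℕ}

def tailCount (k r : ℕ) : ℕ :=
  Nat.count (fun y => tailOuter k r y ∨ tailInner k r y) (2 * k + r)

theorem two_mul_tailCount_of_eq_one (hke : Even k) :
    2 * tailCount k 1 = 3 * k + 2 := by
  rw [tailCount, Nat.even_iff] at *
  rw [show 2 * k + 1 = k + 1 + k by omega, Nat.count_add, Nat.count_add,
    Nat.count_of_forall (n := k), Nat.count_of_forall (n := 1), Nat.count_eq_half_of_iff_even]
  all_goals first | omega | (intro x hx; unfold tailOuter tailInner; split_ifs <;> omega)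

theorem two_mul_tailCount_of_lt (hke : Even k) (hr : Odd r) (h1r : 1 < r) (hrk : r < k) :
    2 * tailCount k r = 3 * k + 3 * r - 3 := by
  rw [tailCount, Nat.even_iff, Nat.odd_iff] at *
  rw [show 2 * k + r = k + r + 1 + (k - r - 1) + (r - 1) + 1 by omega, Nat.count_add,
    Nat.count_add, Nat.count_add, Nat.count_add, Nat.count_add,
    Nat.count_of_forall (n := k), Nat.count_of_forall (n := r),
    Nat.count_of_forall_not (n := 1), Nat.count_eq_half_of_iff_even (n := k - r - 1),
    Nat.count_of_forall (n := r - 1), Nat.count_of_forall_not (n := 1)]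
  all_goals first | omega | (intro x hx; unfold tailOuter tailInner; split_ifs <;> omega)

theorem two_mul_tailCount_of_gt (hke : Even k) (hr : Odd r) (hkr : k < r) (hr2k : r < 2 * k) :
    2 * tailCount k r = 5 * k + r - 3 := by
  rw [tailCount, Nat.even_iff, Nat.odd_iff] at *
  rw [show 2 * k + r = 2 * k + 1 + (k - 1) + 1 + (r - k - 1) by omega, Nat.count_add,
    Nat.count_add, Nat.count_add, Nat.count_add,
    Nat.count_of_forall (n := 2 * k), Nat.count_of_forall_not (n := 1),
    Nat.count_of_forall (n := k - 1), Nat.count_of_forall_not (n := 1),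
    Nat.count_eq_half_of_iff_even (n := r - k - 1)]
  all_goals first | omega | (intro x hx; unfold tailOuter tailInner; split_ifs <;> omega)

theorem tailCount_eq (hke : Even k) (hr : Odd r) (hrk : r ≠ k) (hr2k : r < 2 * k)
    {c : ℤ} (hc1 : r = 1 → c = -(k : ℤ) / 2 + 2)
    (hc2 : 1 < r → r < k → c = (3 * (r : ℤ) - k - 1) / 2)
    (hc3 : k < r → c = (k : ℤ) / 2 + ((r : ℤ) - 1) / 2) :
    (tailCount k r : ℤ) = c + 2 * k - 1 := by
  have hke' := Nat.even_iff.1 hke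
  have hr' := Nat.odd_iff.1 hr
  rcases Nat.lt_or_gt_of_ne hrk with hlt | hgt
  · rcases (show r = 1 ∨ 1 < r by omega) with rfl | h1r
    · have := two_mul_tailCount_of_eq_one hke
      have := hc1 rfl
      omega
    · have := two_mul_tailCount_of_lt hke hr h1r hlt
      have := hc2 h1r hlt
      omega
  · have := two_mul_tailCount_of_gt hke hr hgt hr2k
    have := hc3 hgt
    omega

end TailCount

section Cycle

variable {k r : ℕ}

abbrev cycleOuter (k r : ℕ) : ℕ → Prop := append (2 * k + r) (tailOuter k r) (blockOuter k)

abbrev cycleInner (k r : ℕ) : ℕ → Prop := append (2 * k + r) (tailInner k r) (blockInner k)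

theorem isIndep_vertexSet_cycle (hk : 0 < k) (hke : Even k) (hr : Odd r) {q n : ℕ}
    [NeZero n] (hn : n = 2 * k + r + 2 * k * q) :
    IsIndep (P n k) (vertexSet n (cycleOuter k r) (cycleInner k r)) := by
  have hjoinO : ∀ j < k, tailOuter k r (2 * k + r + j) ↔ blockOuter k j := fun j hj => by
    rw [tailOuter_add_iff, blockOuter_iff_of_lt hj]
  have hjoinI : ∀ j < k, tailInner k r (2 * k + r + j) ↔ blockInner k j := fun j hj => by
    rw [tailInner_add_iff, blockInner_iff_of_lt hj]
  refine isIndep_vertexSet hk (by omega) (fun j hj => ?_) (fun j hj => ?_) (fun x _ => ?_)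
    (fun x _ => ?_) (fun x _ => ?_)
  · rw [hn]
    exact append_add_mul_add_iff periodic_blockOuter q (by omega)
      ((tailOuter_iff_of_lt hj).trans (blockOuter_iff_of_lt hj).symm)
  · rw [hn]
    exact append_add_mul_add_iff periodic_blockInner q (by omega)
      ((tailInner_iff_of_lt hj).trans (blockInner_iff_of_lt hj).symm)
  · exact append_not_of_forall_not (fun y hy => tailOuter_add_one hke hr hy)
      (fun y => blockOuter_add_one hk hke) (fun j hj => hjoinO j (by omega)) x
  · exact append_not_of_forall_not (fun y hy => tailInner_add_self hk hke hr hy)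
      (fun y => blockInner_add_self hk hke) hjoinI x
  · exact append_not_of_forall_not (d := 0) (fun y _ => not_tailInner_of_tailOuter)
      (fun y => not_blockInner_of_blockOuter) (fun j hj => absurd hj j.not_lt_zero) x

theorem card_vertexSet_cycle (hk : 0 < k) {q n : ℕ} [NeZero n]
    (hn : n = 2 * k + r + 2 * k * q) :
    #(vertexSet n (cycleOuter k r) (cycleInner k r)) = tailCount k r + q * (2 * k - 1) := by
  rw [card_vertexSet, hn, count_append, count_append, tailCount,
    Nat.count_or_of_disjoint fun y _ => not_tailInner_of_tailOuter,
    ← count_blockOuter_or_blockInner hk q,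
    Nat.count_or_of_disjoint fun y _ => not_blockInner_of_blockOuter]
  ring

end Cycle

/-- For odd `n` and even `k > 2` with `n > 2k`, writing `r = n mod 2k`,
`α(P(n,k)) ≥ (2k−1)⌊n/(2k)⌋ + c`, where `c = −k/2 + 2` if `r = 1`,
`c = (3r−k−1)/2` if `1 < r < k`, and `c = k/2 + (r−1)/2` if `k < r < 2k`. -/
theorem alpha_lower_bound_odd_even (n k : ℕ) (hno : Odd n) (hke : Even k)
    (hk : 2 < k) (hn : 2 * k < n) (r : ℕ) (hr : r = n % (2 * k)) (c : ℤ)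
    (hc1 : r = 1 → c = -(k : ℤ) / 2 + 2)
    (hc2 : 1 < r → r < k → c = (3 * (r : ℤ) - k - 1) / 2)
    (hc3 : k < r → c = (k : ℤ) / 2 + ((r : ℤ) - 1) / 2) :
    (2 * (k : ℤ) - 1) * ((n / (2 * k) : ℕ) : ℤ) + c ≤ (alpha n k : ℤ) := by
  have hk0 : 0 < k := by omega
  obtain ⟨q, hq⟩ : ∃ q, n / (2 * k) = q + 1 :=
    ⟨n / (2 * k) - 1, by have := (Nat.one_le_div_iff (by omega)).2 hn.le; omega⟩
  have hn_eq : n = 2 * k + r + 2 * k * q := by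
    have := Nat.div_add_mod n (2 * k)
    rw [hq, ← hr, Nat.mul_succ] at this
    omega
  have hr2k : r < 2 * k := hr ▸ Nat.mod_lt _ (by omega)
  have hr_odd : Odd r := by
    have : 2 * k * q % 2 = 0 := by rw [Nat.mul_assoc]; exact Nat.mul_mod_right 2 _
    rw [Nat.odd_iff] at hno ⊢
    omega
  have hrk : r ≠ k := by
    rintro rfl
    exact Nat.not_even_iff_odd.2 hr_odd hke
  have : NeZero n := ⟨by omega⟩
  have hS : tailCount k r + q * (2 * k - 1) ≤ alpha n k := card_vertexSet_cycle hk0 hn_eq ▸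
    card_le_indepNum (isIndep_vertexSet_cycle hk0 hke hr_odd hn_eq)
  have hT := tailCount_eq hke hr_odd hrk hr2k hc1 hc2 hc3
  zify [show 1 ≤ 2 * k by omega] at hS
  rw [hq]
  push_cast
  linarith

end GP
end
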